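/- Let 1 < p ≤ 2 and let (Ω, F, (F_n), P) be a filtered atomic probability space whose associated collection ℰ supports all initial segments of a generalized Haar system with constant K. Let X be a Banach space and suppose there exists T_p > 0 such that for every f ∈ L^p(Ω, F, P; X): ‖f‖_{L^p(Ω;X)} ≤ T_p (‖E f‖^p + ∑_{n≥1} ‖E[f|F_n] − E[f|F_{n−1}]‖_{L^p(Ω;X)}^p)^{1/p}. Then X has Haar type p with constant T_p · K^{2/p − 1}. -/

import Mathlib

open MeasureTheory ENNReal

noncomputable section

namespace Paper

/-- A filtered atomic probability space structure on `(Ω, m0, P)`: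
an increasing sequence of finite measurable partitions `part n` of `Ω` into atoms of
positive measure (with `part 0 = {univ}`, so that the `0`-th σ-algebra is trivial),
generating the ambient σ-algebra, together with a choice `star n A` of a child of
maximal measure for every atom `A` of `part n`. -/
structure FilteredAtomic (Ω : Type*) [m0 : MeasurableSpace Ω] (P : Measure Ω) where
  part : ℕ → Finset (Set Ω)
  part_zero : part 0 = {Set.univ}
  meas : ∀ n, ∀ A ∈ part n, MeasurableSet A
  pos : ∀ n, ∀ A ∈ part n, 0 < P A
  disj : ∀ n, (part n : Set (Set Ω)).PairwiseDisjoint id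
  cover : ∀ n, ⋃₀ (part n : Set (Set Ω)) = Set.univ
  refined : ∀ n, ∀ A ∈ part (n + 1), ∃ B ∈ part n, A ⊆ B
  gen : m0 = ⨆ n, MeasurableSpace.generateFrom (part n : Set (Set Ω))
  star : ℕ → Set Ω → Set Ω
  star_mem : ∀ n, ∀ A ∈ part n, star n A ∈ part (n + 1)
  star_sub : ∀ n, ∀ A ∈ part n, star n A ⊆ A
  star_max : ∀ n, ∀ A ∈ part n, ∀ B ∈ part (n + 1), B ⊆ A → P B ≤ P (star n A)

variable {Ω : Type*} [m0 : MeasurableSpace Ω] {P : Measure Ω}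

/-- The filtration `F_n` generated by the atoms of the `n`-th partition
(`F_0` is the trivial σ-algebra since `part 0 = {univ}`). -/
def FilteredAtomic.filt (F : FilteredAtomic Ω P) (n : ℕ) : MeasurableSpace Ω :=
  MeasurableSpace.generateFrom (F.part n : Set (Set Ω))

/-- The collection 𝒜 of all atoms. -/
def FilteredAtomic.atoms (F : FilteredAtomic Ω P) : Set (Set Ω) :=
  ⋃ n, (F.part n : Set (Set Ω))

/-- The collection 𝒞 = {star A : A ∈ 𝒜}. -/
def FilteredAtomic.starSets (F : FilteredAtomic Ω P) : Set (Set Ω) :=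
  {B | ∃ n, ∃ A ∈ F.part n, B = F.star n A}

/-- The collection ℰ = 𝒜 \ 𝒞. -/
def FilteredAtomic.eColl (F : FilteredAtomic Ω P) : Set (Set Ω) :=
  F.atoms \ F.starSets

/-- The collection ℬ = {Ã : A ∈ 𝒜, P(Ã) > 0}, where Ã = A \ star A. -/
def FilteredAtomic.bColl (F : FilteredAtomic Ω P) : Set (Set Ω) :=
  {S | (∃ n, ∃ A ∈ F.part n, S = A \ F.star n A) ∧ 0 < P S}

/-- The Carleson constant [[R]] of a collection of sets. -/
def carleson (P : Measure Ω) (R : Set (Set Ω)) : ℝ≥0∞ :=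
  ⨆ I ∈ R, (P I)⁻¹ * ∑' J : {J : Set Ω // J ∈ R ∧ J ⊆ I}, P (J : Set Ω)

/-- A collection is nested if any two members are disjoint or comparable. -/
def Nested (R : Set (Set Ω)) : Prop :=
  ∀ A ∈ R, ∀ B ∈ R, (A ∩ B).Nonempty → A ⊆ B ∨ B ⊆ A

/-- `G1 R A`: the maximal members of `R` strictly contained in `A`. -/
def G1 (R : Set (Set Ω)) (A : Set Ω) : Set (Set Ω) :=
  {B | B ∈ R ∧ B ⊂ A ∧ ∀ C ∈ R, C ⊂ A → B ⊆ C → B = C}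

/-- `Gk R k A`: the `k`-th generation of `R` inside `A`. -/
def Gk (R : Set (Set Ω)) : ℕ → Set Ω → Set (Set Ω)
  | 0, A => {A}
  | k + 1, A => ⋃ J ∈ Gk R k A, G1 R J

/-- Martingale difference `E[f|F_{n+1}] - E[f|F_n]`; with the present indexing this is the
paper's `Δ_{n+1} f`, so `fun n => F.mdiff f n` enumerates `Δ_1 f, Δ_2 f, …`. -/
def FilteredAtomic.mdiff (F : FilteredAtomic Ω P) {X : Type*} [NormedAddCommGroup X]
    [NormedSpace ℝ X] [CompleteSpace X] (f : Ω → X) (n : ℕ) : Ω → X :=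
  P[f|F.filt (n + 1)] - P[f|F.filt n]

/-- `(‖E f‖^p + ∑_{n ≥ 1} ‖E[f|F_n] - E[f|F_{n-1}]‖_{L^p}^p)^{1/p}` as an `ℝ≥0∞` number. -/
def FilteredAtomic.mtBound (F : FilteredAtomic Ω P) {X : Type*} [NormedAddCommGroup X]
    [NormedSpace ℝ X] [CompleteSpace X] (f : Ω → X) (p : ℝ) : ℝ≥0∞ :=
  ((‖∫ ω, f ω ∂P‖₊ : ℝ≥0∞) ^ p +
    ∑' n : ℕ, eLpNorm (F.mdiff f n) (ENNReal.ofReal p) P ^ p) ^ (1 / p)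

/-- `M` is a scalar martingale type `p` constant for the filtered space. -/
def ScalarMT (F : FilteredAtomic Ω P) (p M : ℝ) : Prop :=
  1 ≤ M ∧ ∀ g : Ω → ℝ, MemLp g (ENNReal.ofReal p) P →
    eLpNorm g (ENNReal.ofReal p) P ≤ ENNReal.ofReal M * F.mtBound g p

/-- The dyadic interval `[k/2^n, (k+1)/2^n) ⊆ [0,1)` (for `k < 2^n`). -/
def dyadic (n k : ℕ) : Set ℝ := Set.Ico ((k : ℝ) / 2 ^ n) (((k : ℝ) + 1) / 2 ^ n)

/-- The Haar function `h_I = 1_{I⁺} - 1_{I⁻}` of the dyadic interval `I = [k/2^n, (k+1)/2^n)`. -/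
def haarFn (n k : ℕ) : ℝ → ℝ :=
  (dyadic (n + 1) (2 * k)).indicator 1 - (dyadic (n + 1) (2 * k + 1)).indicator 1

/-- `X` has Haar type `p` with constant `C`: for every finitely supported family of vectors
indexed by dyadic subintervals of `[0,1)` (encoded as pairs `(n,k)` with `k < 2^n`),
`‖∑ x_I h_I‖_{L^p([0,1);X)} ≤ C (∑ ‖x_I‖^p |I|)^{1/p}`. -/
def HaarTypeWith (X : Type*) [NormedAddCommGroup X] [NormedSpace ℝ X] (p C : ℝ) : Prop :=
  ∀ s : Finset (ℕ × ℕ), (∀ q ∈ s, q.2 < 2 ^ q.1) → ∀ x : ℕ × ℕ → X,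
    (∫ t in Set.Ico (0 : ℝ) 1, ‖∑ q ∈ s, haarFn q.1 q.2 t • x q‖ ^ p) ^ (1 / p) ≤
      C * (∑ q ∈ s, ‖x q‖ ^ p * ((2 : ℝ) ^ q.1)⁻¹) ^ (1 / p)

/-- The order `≺` on atoms: earlier generation first, and within a generation larger
measure first. -/
def Prec (F : FilteredAtomic Ω P) (B₁ B₂ : Set Ω) : Prop :=
  ∃ l m : ℕ, B₁ ∈ F.part l ∧ B₂ ∈ F.part m ∧ (l < m ∨ (l = m ∧ P B₂ < P B₁))

/-- `U_j = {B ∈ G_1(ℰ, Y_{j-1}) : B ≺ Y_j}`. -/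
def Uset (F : FilteredAtomic Ω P) (Y : ℕ → Set Ω) (j : ℕ) : Set (Set Ω) :=
  {B | B ∈ G1 F.eColl (Y (j - 1)) ∧ Prec F B (Y j)}

/-- The sequence `Y` satisfies condition `D_m(A)`. -/
def CondD (F : FilteredAtomic Ω P) (A : Set Ω) (Y : ℕ → Set Ω) (m : ℕ) : Prop :=
  Y 0 = A ∧ (∀ j ∈ Finset.Icc 1 m, Y j ∈ G1 F.eColl (Y (j - 1))) ∧
    ∑ j ∈ Finset.Icc 1 m, P (⋃₀ Uset F Y j) ≤ 2⁻¹ * P A ∧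
    2⁻¹ * P A ≤ P (Y m) + ∑ j ∈ Finset.Icc 1 m, P (⋃₀ Uset F Y j)

/-- The collection ℰ supports all initial segments of a generalized Haar system with
constant `K`.  Dyadic intervals in `𝒟_n` are encoded as pairs `(j,k)`, `j ≤ n`, `k < 2^j`,
corresponding to `[k/2^j, (k+1)/2^j)`; `ε = δ·2^{-n-1}`. -/
def SupportsHaar (F : FilteredAtomic Ω P) (K : ℝ) : Prop :=
  0 < K ∧ ∀ (n : ℕ) (δ : ℝ), 0 < δ →
    ∃ (C : ℕ × ℕ → Set (Set Ω)) (g : ℕ × ℕ → Ω → ℝ) (A0 : Set Ω) (S : ℕ),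
      A0 ∈ F.eColl ∧
      -- (A1)
      C (0, 0) = {A0} ∧
      -- (A2)
      (∀ j k, j ≤ n → k < 2 ^ j → C (j, k) ⊆ {A | A ∈ F.eColl ∧ A ⊆ A0}) ∧
      -- (A3)
      (∀ j k, j ≤ n → k < 2 ^ j → (C (j, k)).PairwiseDisjoint id) ∧
      -- (A4)
      (∀ j k l i, j ≤ n → k < 2 ^ j → l ≤ n → i < 2 ^ l →
        ((⋃₀ C (j, k) ⊆ ⋃₀ C (l, i) ↔ dyadic j k ⊆ dyadic l i) ∧
          ((⋃₀ C (j, k) ∩ ⋃₀ C (l, i)).Nonempty ↔ (dyadic j k ∩ dyadic l i).Nonempty))) ∧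
      -- (A5)
      (∀ j k, j + 1 ≤ n → k < 2 ^ j →
        (∀ ω, g (j, k) ω ∈ Set.Icc (-1 : ℝ) 1) ∧
        Function.support (g (j, k)) ⊆ ⋃₀ C (j, k) ∧
        ⋃₀ C (j + 1, 2 * k) ⊆ {ω | g (j, k) ω = 1} ∧
        ⋃₀ C (j + 1, 2 * k + 1) ⊆ {ω | g (j, k) ω = -1}) ∧
      -- (A6)
      (∀ j k, j ≤ n → k < 2 ^ j → ∀ A ∈ C (j, k), MeasurableSet[F.filt S] A) ∧
      -- (A7)
      (∀ j k, j + 1 ≤ n → k < 2 ^ j → Measurable[F.filt S] (g (j, k))) ∧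
      -- (A8)
      (∀ A ∈ F.part S, ∀ m, 1 ≤ m → m ≤ S →
        ∀ j k j' k', j + 1 ≤ n → k < 2 ^ j → j' + 1 ≤ n → k' < 2 ^ j' →
          ¬ F.mdiff (g (j, k)) (m - 1) =ᵐ[P.restrict A] (0 : Ω → ℝ) →
          ¬ F.mdiff (g (j', k')) (m - 1) =ᵐ[P.restrict A] (0 : Ω → ℝ) →
          (j, k) = (j', k')) ∧
      -- (A9)
      (∀ j k, j + 1 ≤ n → k < 2 ^ j →
        ∑' i : ℕ, eLpNorm (F.mdiff (g (j, k)) i) 1 P ≤ ENNReal.ofReal K * P (⋃₀ C (j, k))) ∧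
      -- (A10)
      (∀ j k, j ≤ n → k < 2 ^ j →
        ENNReal.ofReal (((2 : ℝ) ^ j)⁻¹ - 2 * (δ * ((2 : ℝ) ^ (n + 1))⁻¹)) * P A0 ≤
            P (⋃₀ C (j, k)) ∧
          P (⋃₀ C (j, k)) ≤ ENNReal.ofReal (((2 : ℝ) ^ j)⁻¹) * P A0)

/-!
Given vectors `x_I` indexed by dyadic intervals of length at least `2^{1-N}`, take the generalized
Haar system `(g_I)` of depth `N` and the test function `f = ∑ g_I x_I`. On each piece `𝒞_J*`
(`|J| = 2^{-N}`) of `A₀` the function `f` equals the Haar sum `∑ h_I x_I` on `J`, and these pieces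
nearly exhaust `A₀`, so `‖f‖ₚᵖ ≥ (1 - δ) P(A₀) ‖∑ h_I x_I‖ₚᵖ`. By (A10) the mean of `f` is
`O(δ)`. By (A8), on every atom at most one `g_I` moves at each time, so
`‖Δₘ f‖ₚᵖ ≤ ∑_I ‖x_I‖ᵖ ‖Δₘ g_I‖ₚᵖ`, and Hölder interpolation between the `L¹` bound (A9) and the
orthogonality of martingale increments in `L²` gives
`∑ₘ ‖Δₘ g_I‖ₚᵖ ≤ K^{2-p} P(𝒞_I*) ≤ K^{2-p} |I| P(A₀)`. Inserting `f` into the hypothesis, dividing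
by `P(A₀)` and letting `δ → 0` leaves `‖∑ h_I x_I‖ₚᵖ ≤ Tᵖ K^{2-p} ∑ ‖x_I‖ᵖ |I|`.
-/

namespace FilteredAtomic

variable (F : FilteredAtomic Ω P)

theorem filt_le (n : ℕ) : F.filt n ≤ m0 := by
  conv_rhs => rw [F.gen]
  exact le_iSup (fun n => MeasurableSpace.generateFrom (F.part n : Set (Set Ω))) n

theorem exists_mem_part (n : ℕ) (ω : Ω) : ∃ A ∈ F.part n, ω ∈ A := by
  obtain ⟨A, hA, hωA⟩ : ω ∈ ⋃₀ (F.part n : Set (Set Ω)) := F.cover n ▸ Set.mem_univ ω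
  exact ⟨A, hA, hωA⟩

theorem eq_of_mem_part {n : ℕ} {A B : Set Ω} (hA : A ∈ F.part n) (hB : B ∈ F.part n) {ω : Ω}
    (hωA : ω ∈ A) (hωB : ω ∈ B) : A = B :=
  by_contra fun hne => Set.disjoint_left.mp (F.disj n hA hB hne) hωA hωB

theorem measurableSet_filt_of_mem {n : ℕ} {A : Set Ω} (hA : A ∈ F.part n) :
    MeasurableSet[F.filt n] A :=
  MeasurableSpace.measurableSet_generateFrom hA

theorem filt_mono : Monotone F.filt := by
  refine monotone_nat_of_le_succ fun n => MeasurableSpace.generateFrom_le fun A hA => ?_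
  have hA_eq : A = ⋃₀ {B | B ∈ F.part (n + 1) ∧ B ⊆ A} := by
    refine Set.Subset.antisymm (fun ω hω => ?_) (Set.sUnion_subset fun B hB => hB.2)
    obtain ⟨B, hB, hωB⟩ := F.exists_mem_part (n + 1) ω
    obtain ⟨B', hB', hBB'⟩ := F.refined n B hB
    obtain rfl := F.eq_of_mem_part hB' hA (hBB' hωB) hω
    exact ⟨B, ⟨hB, hBB'⟩, hωB⟩
  rw [hA_eq]
  exact ((F.part (n + 1)).finite_toSet.subset fun B hB => hB.1).measurableSet_sUnion
    fun B hB => F.measurableSet_filt_of_mem hB.1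

/-- `F.mdiff f n` is by definition the increment `P[f|ℱ (n+1)] - P[f|ℱ n]` of this
filtration. -/
def filtration : Filtration ℕ m0 := ⟨F.filt, F.filt_mono, F.filt_le⟩

theorem subset_or_disjoint_of_measurableSet {n : ℕ} {s : Set Ω} (hs : MeasurableSet[F.filt n] s)
    {A : Set Ω} (hA : A ∈ F.part n) : A ⊆ s ∨ Disjoint A s := by
  induction hs with
  | basic u hu =>
    rcases eq_or_ne A u with rfl | hne
    · exact Or.inl subset_rfl
    · exact Or.inr (F.disj n hA hu hne)
  | empty => exact Or.inr disjoint_bot_right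
  | compl u _ ih =>
    exact ih.symm.imp Set.subset_compl_iff_disjoint_right.mpr
      Set.disjoint_compl_right_iff_subset.mpr
  | iUnion u _ ih =>
    by_cases h : ∃ i, A ⊆ u i
    · obtain ⟨i, hi⟩ := h
      exact Or.inl (hi.trans (Set.subset_iUnion u i))
    · push Not at h
      exact Or.inr (Set.disjoint_iUnion_right.mpr fun i => (ih i).resolve_left (h i))

/-- Any union of `F_S`-measurable sets is a finite union of atoms of `𝒜_S`. -/
theorem measurableSet_sUnion {S : ℕ} {𝒞 : Set (Set Ω)}
    (h𝒞 : ∀ A ∈ 𝒞, MeasurableSet[F.filt S] A) : MeasurableSet (⋃₀ 𝒞) := by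
  have h_eq : ⋃₀ 𝒞 = ⋃₀ {B | B ∈ F.part S ∧ ∃ A ∈ 𝒞, B ⊆ A} := by
    refine Set.Subset.antisymm (fun ω ⟨A, hA, hωA⟩ => ?_)
      (Set.sUnion_subset fun B ⟨_, A, hA, hBA⟩ => hBA.trans (Set.subset_sUnion_of_mem hA))
    obtain ⟨B, hB, hωB⟩ := F.exists_mem_part S ω
    have hBA : B ⊆ A := (F.subset_or_disjoint_of_measurableSet (h𝒞 A hA) hB).resolve_right
      fun hd => Set.disjoint_left.mp hd hωB hωA
    exact ⟨B, ⟨hB, A, hA, hBA⟩, hωB⟩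
  rw [h_eq]
  exact ((F.part S).finite_toSet.subset fun B hB => hB.1).measurableSet_sUnion
    fun B hB => F.meas S B hB.1

theorem ae_of_forall_part {S : ℕ} {q : Ω → Prop}
    (h : ∀ A ∈ F.part S, ∀ᵐ ω ∂P.restrict A, q ω) : ∀ᵐ ω ∂P, q ω := by
  have h_univ : (⋃ A ∈ F.part S, A) = Set.univ := by
    simpa only [Set.sUnion_eq_biUnion, Finset.mem_coe] using F.cover S
  rw [← Measure.restrict_univ (μ := P), ← h_univ]
  exact (ae_restrict_biUnion_finset_iff _ _ _).mpr h

theorem mtBound_rpow {X : Type*} [NormedAddCommGroup X] [NormedSpace ℝ X]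
    [CompleteSpace X] (f : Ω → X) {p : ℝ} (hp : 0 < p) :
    F.mtBound f p ^ p =
      ‖∫ ω, f ω ∂P‖ₑ ^ p + ∑' n, eLpNorm (F.mdiff f n) (ENNReal.ofReal p) P ^ p := by
  rw [mtBound, ← ENNReal.rpow_mul, one_div_mul_cancel hp.ne', ENNReal.rpow_one,
    enorm_eq_nnnorm]

end FilteredAtomic

section Increments

variable {X : Type*} [NormedAddCommGroup X] [NormedSpace ℝ X]

theorem lintegral_enorm_sq_eq_ofReal_integral {u : Ω → ℝ}
    (hu : Integrable (fun ω => u ω ^ 2) P) :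
    ∫⁻ ω, ‖u ω‖ₑ ^ 2 ∂P = ENNReal.ofReal (∫ ω, u ω ^ 2 ∂P) := by
  rw [ofReal_integral_eq_lintegral_ofReal hu (ae_of_all _ fun ω => sq_nonneg _)]
  refine lintegral_congr fun ω => ?_
  rw [Real.enorm_eq_ofReal_abs, ← ENNReal.ofReal_pow (abs_nonneg _), sq_abs]

theorem condExp_sum_smul_ae_eq [CompleteSpace X] {m : MeasurableSpace Ω} {ι : Type*} (s : Finset ι)
    {g : ι → Ω → ℝ} (hg : ∀ i ∈ s, Integrable (g i) P) (x : ι → X) :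
    P[fun ω => ∑ i ∈ s, g i ω • x i|m] =ᵐ[P] fun ω => ∑ i ∈ s, P[g i|m] ω • x i := by
  have hsum : (fun ω => ∑ i ∈ s, g i ω • x i) = ∑ i ∈ s, fun ω => g i ω • x i := by
    ext ω; simp
  have hsmul : ∀ i ∈ s, P[fun ω => g i ω • x i|m] =ᵐ[P] fun ω => P[g i|m] ω • x i :=
    fun i hi => condExp_smul_of_aestronglyMeasurable_right (hg i hi)
      ((hg i hi).smul_const (x i)) aestronglyMeasurable_const
  rw [hsum]
  filter_upwards [condExp_finsetSum (fun i hi => (hg i hi).smul_const (x i)) m,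
    (Filter.eventually_all_finset s).2 hsmul] with ω h_sum h_smul
  rw [h_sum, Finset.sum_apply]
  exact Finset.sum_congr rfl h_smul

variable [IsFiniteMeasure P] {ℱ : Filtration ℕ m0}

theorem condExp_succ_sub_condExp_eq_zero {S n : ℕ} (hSn : S ≤ n) {f : Ω → X}
    (hf : StronglyMeasurable[ℱ S] f) (hfi : Integrable f P) :
    P[f|ℱ (n + 1)] - P[f|ℱ n] = 0 := by
  rw [condExp_of_stronglyMeasurable (ℱ.le _) (hf.mono (ℱ.mono (hSn.trans n.le_succ))) hfi,
    condExp_of_stronglyMeasurable (ℱ.le _) (hf.mono (ℱ.mono hSn)) hfi, sub_self]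

theorem integrable_sq_of_ae_abs_le {u : Ω → ℝ} (hu : AEStronglyMeasurable u P) {c : ℝ}
    (hc : ∀ᵐ ω ∂P, |u ω| ≤ c) : Integrable (fun ω => u ω ^ 2) P :=
  .of_bound (hu.pow 2) (c ^ 2) <| hc.mono fun ω h => by
    rw [norm_pow, Real.norm_eq_abs]
    exact pow_le_pow_left₀ (abs_nonneg _) h 2

theorem integral_mul_condExp {m : MeasurableSpace Ω} (hm : m ≤ m0) {h g : Ω → ℝ}
    (hh : StronglyMeasurable[m] h) {c : ℝ} (hc : ∀ᵐ ω ∂P, |h ω| ≤ c) (hg : Integrable g P) :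
    ∫ ω, h ω * P[g|m] ω ∂P = ∫ ω, h ω * g ω ∂P := by
  have hhg : Integrable (h * g) P :=
    hg.bdd_mul (hh.mono hm).aestronglyMeasurable (by simpa using hc)
  calc ∫ ω, h ω * P[g|m] ω ∂P = ∫ ω, P[h * g|m] ω ∂P :=
        integral_congr_ae (condExp_mul_of_stronglyMeasurable_left hh hhg hg).symm
    _ = ∫ ω, h ω * g ω ∂P := integral_condExp hm

theorem integral_condExp_succ_sub_sq {g : Ω → ℝ} (hgm : AEStronglyMeasurable g P) {c : ℝ}
    (hc : ∀ᵐ ω ∂P, |g ω| ≤ c) (n : ℕ) :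
    ∫ ω, (P[g|ℱ (n + 1)] ω - P[g|ℱ n] ω) ^ 2 ∂P =
      ∫ ω, P[g|ℱ (n + 1)] ω ^ 2 ∂P - ∫ ω, P[g|ℱ n] ω ^ 2 ∂P := by
  set a := P[g|ℱ n]
  set b := P[g|ℱ (n + 1)]
  have hg : Integrable g P := .of_bound hgm c (by simpa using hc)
  have ha : ∀ᵐ ω ∂P, |a ω| ≤ c := ae_bdd_abs_condExp_of_ae_bdd_abs hc
  have hb : ∀ᵐ ω ∂P, |b ω| ≤ c := ae_bdd_abs_condExp_of_ae_bdd_abs hc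
  have ha_sm : StronglyMeasurable[ℱ n] a := stronglyMeasurable_condExp
  have hab : ∫ ω, a ω * b ω ∂P = ∫ ω, a ω * a ω ∂P := by
    rw [integral_mul_condExp (ℱ.le _) (ha_sm.mono (ℱ.mono n.le_succ)) ha hg,
      integral_mul_condExp (ℱ.le _) ha_sm ha hg]
  have ia2 : Integrable (fun ω => a ω ^ 2) P := integrable_sq_of_ae_abs_le integrable_condExp.1 ha
  have ib2 : Integrable (fun ω => b ω ^ 2) P := integrable_sq_of_ae_abs_le integrable_condExp.1 hb
  have iaa : Integrable (fun ω => a ω * a ω) P :=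
    integrable_condExp.bdd_mul integrable_condExp.1 (by simpa using ha)
  have iab : Integrable (fun ω => a ω * b ω) P :=
    integrable_condExp.bdd_mul integrable_condExp.1 (by simpa using ha)
  have h_expand : ∀ ω, (b ω - a ω) ^ 2 = b ω ^ 2 - a ω ^ 2 + 2 * (a ω * a ω - a ω * b ω) :=
    fun ω => by ring
  have i1 : Integrable (fun ω => b ω ^ 2 - a ω ^ 2) P := ib2.sub ia2
  have i2 : Integrable (fun ω => 2 * (a ω * a ω - a ω * b ω)) P := (iaa.sub iab).const_mul 2
  simp_rw [h_expand]
  rw [integral_add i1 i2, integral_sub ib2 ia2,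
    integral_const_mul, integral_sub iaa iab, hab, sub_self, mul_zero, add_zero]

theorem tsum_lintegral_condExp_sub_sq_le {g : Ω → ℝ} (hgm : AEStronglyMeasurable g P) {c : ℝ}
    (hc : ∀ᵐ ω ∂P, |g ω| ≤ c) :
    ∑' n, ∫⁻ ω, ‖P[g|ℱ (n + 1)] ω - P[g|ℱ n] ω‖ₑ ^ 2 ∂P ≤ ∫⁻ ω, ‖g ω‖ₑ ^ 2 ∂P := by
  have hcond : ∀ n, ∀ᵐ ω ∂P, |P[g|ℱ n] ω| ≤ c := fun n => ae_bdd_abs_condExp_of_ae_bdd_abs hc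
  have hincr : ∀ n, Integrable (fun ω => (P[g|ℱ (n + 1)] ω - P[g|ℱ n] ω) ^ 2) P := fun n =>
    integrable_sq_of_ae_abs_le (integrable_condExp.1.sub integrable_condExp.1) (c := c + c) <| by
      filter_upwards [hcond (n + 1), hcond n] with ω h1 h2
      exact (abs_sub _ _).trans (add_le_add h1 h2)
  have hjensen : ∀ S, ∫ ω, P[g|ℱ S] ω ^ 2 ∂P ≤ ∫ ω, g ω ^ 2 ∂P := fun S => by
    simpa only [Real.rpow_two, Real.norm_eq_abs, sq_abs] using
      integral_norm_condExp_rpow_le (m := ℱ S) (μ := P) (f := g) (by norm_num : (1 : ℝ) ≤ 2)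
        (by simpa only [Real.rpow_two, Real.norm_eq_abs, sq_abs] using
          integrable_sq_of_ae_abs_le hgm hc)
  rw [lintegral_enorm_sq_eq_ofReal_integral (integrable_sq_of_ae_abs_le hgm hc)]
  refine ENNReal.tsum_le_of_sum_range_le fun S => ?_
  simp_rw [lintegral_enorm_sq_eq_ofReal_integral (hincr _)]
  rw [← ENNReal.ofReal_sum_of_nonneg fun n _ => integral_nonneg fun ω => sq_nonneg _]
  refine ENNReal.ofReal_le_ofReal ?_
  rw [Finset.sum_congr rfl fun n _ => integral_condExp_succ_sub_sq hgm hc n,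
    Finset.sum_range_sub (fun n => ∫ ω, P[g|ℱ n] ω ^ 2 ∂P)]
  have h0 : 0 ≤ ∫ ω, P[g|ℱ 0] ω ^ 2 ∂P := integral_nonneg fun ω => sq_nonneg _
  linarith [hjensen S]

end Increments

section Interpolation

/-- Hölder's inequality with exponents `2 - p` and `p - 1`, applied first in `ω` and then in
`n`. -/
theorem tsum_lintegral_rpow_le {u : ℕ → Ω → ℝ≥0∞} (hu : ∀ n, AEMeasurable (u n) P) {p : ℝ}
    (hp1 : 1 ≤ p) (hp2 : p ≤ 2) :
    ∑' n, ∫⁻ ω, u n ω ^ p ∂P ≤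
      (∑' n, ∫⁻ ω, u n ω ∂P) ^ (2 - p) * (∑' n, ∫⁻ ω, u n ω ^ 2 ∂P) ^ (p - 1) := by
  have hsplit : ∀ a : ℝ≥0∞, a ^ p = a ^ (2 - p) * (a ^ 2) ^ (p - 1) := fun a => by
    rw [← ENNReal.rpow_natCast, ← ENNReal.rpow_mul,
      ← ENNReal.rpow_add_of_nonneg _ _ (by linarith) (by push_cast; linarith)]
    congr 1; push_cast; ring
  have hterm : ∀ n, ∫⁻ ω, u n ω ^ p ∂P ≤
      (∫⁻ ω, u n ω ∂P) ^ (2 - p) * (∫⁻ ω, u n ω ^ 2 ∂P) ^ (p - 1) := fun n => by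
    rw [lintegral_congr fun ω => hsplit (u n ω)]
    exact ENNReal.lintegral_mul_norm_pow_le (hu n) ((hu n).pow_const 2) (by linarith)
      (by linarith) (by ring)
  refine (ENNReal.tsum_le_tsum hterm).trans ?_
  simpa only [lintegral_count] using
    ENNReal.lintegral_mul_norm_pow_le (μ := Measure.count)
      (f := fun n => ∫⁻ ω, u n ω ∂P) (g := fun n => ∫⁻ ω, u n ω ^ 2 ∂P)
      Measurable.of_discrete.aemeasurable Measurable.of_discrete.aemeasurable
      (by linarith) (by linarith) (by ring)

theorem lintegral_enorm_sq_le_measure {g : Ω → ℝ} (hg : ∀ ω, |g ω| ≤ 1) {U : Set Ω}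
    (hU : MeasurableSet U) (hsupp : Function.support g ⊆ U) :
    ∫⁻ ω, ‖g ω‖ₑ ^ 2 ∂P ≤ P U := by
  calc ∫⁻ ω, ‖g ω‖ₑ ^ 2 ∂P ≤ ∫⁻ ω, U.indicator 1 ω ∂P := lintegral_mono fun ω => ?_
    _ = P U := lintegral_indicator_one hU
  by_cases hω : ω ∈ U
  · have : ‖g ω‖ₑ ≤ 1 := by simpa [← ofReal_norm] using hg ω
    simpa [hω] using pow_le_one₀ zero_le this
  · simp [hω, Function.notMem_support.mp fun h => hω (hsupp h)]

variable [IsFiniteMeasure P] {ℱ : Filtration ℕ m0}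

/-- Interpolation between the `L¹` bound `hK` and the `L²` bound `P U` coming from the
orthogonality of the increments. -/
theorem tsum_lintegral_condExp_sub_rpow_le {g : Ω → ℝ} (hgm : AEStronglyMeasurable g P)
    (hg : ∀ ω, |g ω| ≤ 1) {U : Set Ω} (hU : MeasurableSet U) (hsupp : Function.support g ⊆ U)
    {p : ℝ} (hp1 : 1 ≤ p) (hp2 : p ≤ 2) {K : ℝ≥0∞}
    (hK : ∑' n, eLpNorm (P[g|ℱ (n + 1)] - P[g|ℱ n]) 1 P ≤ K * P U) :
    ∑' n, ∫⁻ ω, ‖P[g|ℱ (n + 1)] ω - P[g|ℱ n] ω‖ₑ ^ p ∂P ≤ K ^ (2 - p) * P U := by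
  have hL1 : ∑' n, ∫⁻ ω, ‖P[g|ℱ (n + 1)] ω - P[g|ℱ n] ω‖ₑ ∂P ≤ K * P U := by
    simpa only [eLpNorm_one_eq_lintegral_enorm, Pi.sub_apply] using hK
  have hL2 : ∑' n, ∫⁻ ω, ‖P[g|ℱ (n + 1)] ω - P[g|ℱ n] ω‖ₑ ^ 2 ∂P ≤ P U :=
    (tsum_lintegral_condExp_sub_sq_le hgm (ae_of_all _ hg)).trans
      (lintegral_enorm_sq_le_measure hg hU hsupp)
  calc _ ≤ (∑' n, ∫⁻ ω, ‖P[g|ℱ (n + 1)] ω - P[g|ℱ n] ω‖ₑ ∂P) ^ (2 - p) *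
        (∑' n, ∫⁻ ω, ‖P[g|ℱ (n + 1)] ω - P[g|ℱ n] ω‖ₑ ^ 2 ∂P) ^ (p - 1) :=
        tsum_lintegral_rpow_le (u := fun n ω => ‖P[g|ℱ (n + 1)] ω - P[g|ℱ n] ω‖ₑ)
          (fun n => (integrable_condExp.1.sub integrable_condExp.1).enorm) hp1 hp2
    _ ≤ (K * P U) ^ (2 - p) * P U ^ (p - 1) :=
        mul_le_mul' (ENNReal.rpow_le_rpow hL1 (by linarith))
          (ENNReal.rpow_le_rpow hL2 (by linarith))
    _ = K ^ (2 - p) * P U := by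
        rw [ENNReal.mul_rpow_of_nonneg _ _ (by linarith), mul_assoc,
          ← ENNReal.rpow_add_of_nonneg _ _ (by linarith) (by linarith),
          show 2 - p + (p - 1) = 1 by ring, ENNReal.rpow_one]

end Interpolation

section DisjointSupports

variable {X : Type*} [NormedAddCommGroup X] [NormedSpace ℝ X]

theorem enorm_sum_smul_rpow_le {ι : Type*} {s : Finset ι} {c : ι → ℝ}
    (hc : ∀ i ∈ s, ∀ j ∈ s, c i ≠ 0 → c j ≠ 0 → i = j) (x : ι → X) {p : ℝ} (hp : 0 < p) :
    ‖∑ i ∈ s, c i • x i‖ₑ ^ p ≤ ∑ i ∈ s, ‖x i‖ₑ ^ p * ‖c i‖ₑ ^ p := by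
  by_cases h : ∃ i ∈ s, c i ≠ 0
  · obtain ⟨i, hi, hci⟩ := h
    rw [Finset.sum_eq_single_of_mem i hi fun j hj hji => by
      rw [not_ne_iff.mp fun hcj => hji (hc j hj i hi hcj hci), zero_smul]]
    rw [enorm_smul, ENNReal.mul_rpow_of_nonneg _ _ hp.le, mul_comm]
    exact Finset.single_le_sum (f := fun j => ‖x j‖ₑ ^ p * ‖c j‖ₑ ^ p)
      (fun _ _ => zero_le) hi
  · push Not at h
    rw [Finset.sum_eq_zero fun i hi => by rw [h i hi, zero_smul], enorm_zero,
      ENNReal.zero_rpow_of_pos hp]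
    exact zero_le

theorem lintegral_enorm_sum_smul_rpow_le {ι : Type*} {s : Finset ι} {c : ι → Ω → ℝ}
    (hcm : ∀ i ∈ s, AEMeasurable (c i) P)
    (hc : ∀ᵐ ω ∂P, ∀ i ∈ s, ∀ j ∈ s, c i ω ≠ 0 → c j ω ≠ 0 → i = j) (x : ι → X) {p : ℝ}
    (hp : 0 < p) :
    ∫⁻ ω, ‖∑ i ∈ s, c i ω • x i‖ₑ ^ p ∂P ≤ ∑ i ∈ s, ‖x i‖ₑ ^ p * ∫⁻ ω, ‖c i ω‖ₑ ^ p ∂P := by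
  calc ∫⁻ ω, ‖∑ i ∈ s, c i ω • x i‖ₑ ^ p ∂P
      ≤ ∫⁻ ω, ∑ i ∈ s, ‖x i‖ₑ ^ p * ‖c i ω‖ₑ ^ p ∂P :=
        lintegral_mono_ae (hc.mono fun ω hω => enorm_sum_smul_rpow_le hω x hp)
    _ = ∑ i ∈ s, ‖x i‖ₑ ^ p * ∫⁻ ω, ‖c i ω‖ₑ ^ p ∂P := by
        rw [lintegral_finsetSum' _ fun i hi => ((hcm i hi).enorm.pow_const p).const_mul _]
        exact Finset.sum_congr rfl fun i hi =>
          lintegral_const_mul'' _ ((hcm i hi).enorm.pow_const p)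

end DisjointSupports

section MeasureBounds

variable [IsFiniteMeasure P]

theorem measureReal_le_mul_of_le_ofReal_mul {s t : Set Ω} {c : ℝ} (hc : 0 ≤ c)
    (h : P s ≤ ENNReal.ofReal c * P t) : P.real s ≤ c * P.real t := by
  simpa [measureReal_def, ENNReal.toReal_mul, ENNReal.toReal_ofReal hc] using
    ENNReal.toReal_mono (ENNReal.mul_ne_top ENNReal.ofReal_ne_top (measure_ne_top P t)) h

theorem mul_measureReal_le_of_ofReal_mul_le {s t : Set Ω} {c : ℝ}
    (h : ENNReal.ofReal c * P t ≤ P s) : c * P.real t ≤ P.real s := by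
  rcases le_or_gt c 0 with hc | hc
  · exact (mul_nonpos_of_nonpos_of_nonneg hc measureReal_nonneg).trans measureReal_nonneg
  · simpa [measureReal_def, ENNReal.toReal_mul, ENNReal.toReal_ofReal hc.le] using
      ENNReal.toReal_mono (measure_ne_top P s) h

theorem abs_integral_sub_measureReal_sub_le {g : Ω → ℝ} (hgm : AEStronglyMeasurable g P)
    (hg : ∀ ω, |g ω| ≤ 1) {U V W : Set Ω} (hU : MeasurableSet U) (hV : MeasurableSet V)
    (hW : MeasurableSet W) (hsupp : Function.support g ⊆ U) (hVU : V ⊆ U) (hWU : W ⊆ U)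
    (hVW : Disjoint V W) (hgV : ∀ ω ∈ V, g ω = 1) (hgW : ∀ ω ∈ W, g ω = -1) :
    |∫ ω, g ω ∂P - (P.real V - P.real W)| ≤ P.real U - P.real V - P.real W := by
  have hpt : ∀ ω, |g ω - (V.indicator 1 ω - W.indicator 1 ω)| ≤ (U \ (V ∪ W)).indicator 1 ω := by
    intro ω
    by_cases hωV : ω ∈ V
    · simp [hωV, hgV ω hωV, Set.disjoint_left.mp hVW hωV]
    by_cases hωW : ω ∈ W
    · simp [hωW, hgW ω hωW, hωV]
    by_cases hωU : ω ∈ U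
    · simpa [hωU, hωV, hωW] using hg ω
    · simp [hωU, hωV, hωW, Function.notMem_support.mp fun h => hωU (hsupp h)]
  have hgi : Integrable g P := .of_bound hgm 1 (ae_of_all _ hg)
  have hVi : Integrable (V.indicator (1 : Ω → ℝ)) P := (integrable_const 1).indicator hV
  have hWi : Integrable (W.indicator (1 : Ω → ℝ)) P := (integrable_const 1).indicator hW
  have hrest : P.real (U \ (V ∪ W)) = P.real U - P.real V - P.real W := by
    rw [measureReal_sdiff (Set.union_subset hVU hWU) (hV.union hW), measureReal_union hVW hW]
    ring
  calc |∫ ω, g ω ∂P - (P.real V - P.real W)|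
      = |∫ ω, g ω - (V.indicator 1 ω - W.indicator 1 ω) ∂P| := by
        have hVWi : Integrable (fun ω => V.indicator 1 ω - W.indicator (1 : Ω → ℝ) ω) P :=
          hVi.sub hWi
        rw [integral_sub hgi hVWi, integral_sub hVi hWi, integral_indicator_one hV,
          integral_indicator_one hW]
    _ ≤ ∫ ω, (U \ (V ∪ W)).indicator 1 ω ∂P :=
        (abs_integral_le_integral_abs).trans (integral_mono (hgi.sub (hVi.sub hWi)).abs
          ((integrable_const 1).indicator (hU.diff (hV.union hW))) hpt)
    _ = P.real U - P.real V - P.real W := by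
        rw [integral_indicator_one (hU.diff (hV.union hW)), hrest]

end MeasureBounds

theorem eLpNorm_ofReal_rpow_eq_lintegral {E : Type*} [NormedAddCommGroup E] {f : Ω → E} {p : ℝ}
    (hp : 0 < p) : eLpNorm f (ENNReal.ofReal p) P ^ p = ∫⁻ ω, ‖f ω‖ₑ ^ p ∂P := by
  have := eLpNorm_nnreal_pow_eq_lintegral (f := f) (μ := P) (p := p.toNNReal) (by simpa using hp)
  rwa [Real.coe_toNNReal _ hp.le] at this

theorem sum_enorm_rpow_mul_ofReal {X : Type*} [NormedAddCommGroup X] {ι : Type*}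
    (s : Finset ι) (x : ι → X) {c : ι → ℝ} (hc : ∀ i ∈ s, 0 ≤ c i) {p : ℝ} (hp : 0 ≤ p) :
    ∑ i ∈ s, ‖x i‖ₑ ^ p * ENNReal.ofReal (c i) = ENNReal.ofReal (∑ i ∈ s, ‖x i‖ ^ p * c i) := by
  rw [ENNReal.ofReal_sum_of_nonneg fun i hi => mul_nonneg (by positivity) (hc i hi)]
  refine Finset.sum_congr rfl fun i hi => ?_
  rw [ENNReal.ofReal_mul (by positivity), ← ENNReal.ofReal_rpow_of_nonneg (norm_nonneg _) hp,
    ofReal_norm]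

theorem le_of_forall_one_sub_mul_le_add {L B A c p : ℝ} (hp : 0 < p)
    (h : ∀ δ ∈ Set.Ioo (0 : ℝ) 1, (1 - δ) * L ≤ B + A * (c * δ) ^ p) : L ≤ B := by
  have hcont : ContinuousAt (fun δ : ℝ => B + A * (c * δ) ^ p + δ * L) 0 :=
    ((continuousAt_const.mul ((Real.continuousAt_rpow_const _ _ (Or.inr hp.le)).comp
      (continuous_const.mul continuous_id).continuousAt)).const_add B).add
      (continuous_id.mul continuous_const).continuousAt
  have hlim := hcont.tendsto.mono_left (nhdsWithin_le_nhds (s := Set.Ioi 0))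
  simp only [mul_zero, Real.zero_rpow hp.ne', zero_mul, add_zero] at hlim
  refine ge_of_tendsto hlim ?_
  filter_upwards [Ioo_mem_nhdsGT one_pos] with δ hδ
  linarith [h δ hδ]

section Dyadic

theorem mem_dyadic_iff {n k : ℕ} {t : ℝ} :
    t ∈ dyadic n k ↔ (k : ℝ) ≤ t * 2 ^ n ∧ t * 2 ^ n < k + 1 := by
  rw [dyadic, Set.mem_Ico, div_le_iff₀ (by positivity), lt_div_iff₀ (by positivity)]

theorem eq_of_mem_dyadic {n k l : ℕ} {t : ℝ} (hk : t ∈ dyadic n k) (hl : t ∈ dyadic n l) :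
    k = l := by
  rw [mem_dyadic_iff] at hk hl
  have hkl : (k : ℝ) < l + 1 := hk.1.trans_lt hl.2
  have hlk : (l : ℝ) < k + 1 := hl.1.trans_lt hk.2
  norm_cast at hkl hlk
  omega

theorem left_mem_dyadic (n k : ℕ) : (k : ℝ) / 2 ^ n ∈ dyadic n k := by
  rw [mem_dyadic_iff, div_mul_cancel₀ _ (by positivity)]
  exact ⟨le_rfl, lt_add_one _⟩

theorem dyadic_subset_dyadic_div {m n : ℕ} (h : m ≤ n) (k : ℕ) :
    dyadic n k ⊆ dyadic m (k / 2 ^ (n - m)) := by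
  intro t ht
  rw [mem_dyadic_iff] at ht ⊢
  have hd : (0 : ℝ) < 2 ^ (n - m) := by positivity
  have hpow : t * 2 ^ n = t * 2 ^ m * 2 ^ (n - m) := by
    rw [mul_assoc, ← pow_add, Nat.add_sub_cancel' h]
  have h1 : ((k / 2 ^ (n - m) : ℕ) : ℝ) * 2 ^ (n - m) ≤ k := by
    exact_mod_cast Nat.div_mul_le_self k _
  have h2 : (k : ℝ) + 1 ≤ ((k / 2 ^ (n - m) : ℕ) + 1 : ℝ) * 2 ^ (n - m) := by
    exact_mod_cast (Nat.lt_div_mul_add (a := k) (Nat.two_pow_pos (n - m))).trans_le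
      (by rw [add_one_mul])
  rw [hpow] at ht
  exact ⟨le_of_mul_le_mul_right (h1.trans ht.1) hd, lt_of_mul_lt_mul_right (ht.2.trans_le h2) hd.le⟩

theorem dyadic_succ_subset {j i k : ℕ} (h : i / 2 = k) : dyadic (j + 1) i ⊆ dyadic j k := by
  simpa [h] using dyadic_subset_dyadic_div (Nat.le_succ j) i

theorem indicator_dyadic_of_mem {n i k : ℕ} {t : ℝ} (ht : t ∈ dyadic n i) :
    (dyadic n k).indicator (1 : ℝ → ℝ) t = if i = k then 1 else 0 := by
  split_ifs with h
  · subst h; simp [ht]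
  · exact Set.indicator_of_notMem (fun hk => h (eq_of_mem_dyadic ht hk)) _

theorem haarFn_of_mem_dyadic {j k i : ℕ} {t : ℝ} (ht : t ∈ dyadic (j + 1) i) :
    haarFn j k t = (if i = 2 * k then 1 else 0) - (if i = 2 * k + 1 then 1 else 0) := by
  simp only [haarFn, Pi.sub_apply, indicator_dyadic_of_mem ht]

theorem haarFn_eq_of_mem_dyadic {N j k k' : ℕ} (hj : j + 1 ≤ N) {t t' : ℝ}
    (ht : t ∈ dyadic N k) (ht' : t' ∈ dyadic N k) : haarFn j k' t = haarFn j k' t' := by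
  rw [haarFn_of_mem_dyadic (dyadic_subset_dyadic_div hj k ht),
    haarFn_of_mem_dyadic (dyadic_subset_dyadic_div hj k ht')]

theorem Ico_eq_biUnion_dyadic (N : ℕ) :
    Set.Ico (0 : ℝ) 1 = ⋃ k ∈ Finset.range (2 ^ N), dyadic N k := by
  have hN : (0 : ℝ) < 2 ^ N := by positivity
  ext t
  simp only [Set.mem_Ico, Set.mem_iUnion, Finset.mem_range, mem_dyadic_iff, exists_prop]
  constructor
  · rintro ⟨h0, h1⟩
    have ht0 : 0 ≤ t * 2 ^ N := by positivity
    refine ⟨⌊t * 2 ^ N⌋₊, (Nat.floor_lt ht0).2 ?_, Nat.floor_le ht0, Nat.lt_floor_add_one _⟩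
    push_cast
    nlinarith
  · rintro ⟨k, hk, h1, h2⟩
    have hk' : (k : ℝ) + 1 ≤ 2 ^ N := by exact_mod_cast hk
    exact ⟨(mul_nonneg_iff_of_pos_right hN).1 ((Nat.cast_nonneg k).trans h1),
      lt_of_mul_lt_mul_right (by linarith) hN.le⟩

theorem measurableSet_dyadic (N k : ℕ) : MeasurableSet (dyadic N k) := measurableSet_Ico

theorem volume_dyadic (N k : ℕ) : volume (dyadic N k) = ENNReal.ofReal ((2 ^ N)⁻¹) := by
  rw [dyadic, Real.volume_Ico]
  congr 1
  ring

theorem setIntegral_Ico_norm_haar_sum_rpow {X : Type*} [NormedAddCommGroup X] [NormedSpace ℝ X]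
    (N : ℕ) (s : Finset (ℕ × ℕ)) (hs : ∀ q ∈ s, q.1 + 1 ≤ N) (x : ℕ × ℕ → X) (p : ℝ) :
    ∫ t in Set.Ico (0 : ℝ) 1, ‖∑ q ∈ s, haarFn q.1 q.2 t • x q‖ ^ p =
      ∑ k ∈ Finset.range (2 ^ N),
        (2 ^ N)⁻¹ * ‖∑ q ∈ s, haarFn q.1 q.2 ((k : ℝ) / 2 ^ N) • x q‖ ^ p := by
  have hconst : ∀ k : ℕ, Set.EqOn (fun t => ‖∑ q ∈ s, haarFn q.1 q.2 t • x q‖ ^ p)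
      (fun _ => ‖∑ q ∈ s, haarFn q.1 q.2 ((k : ℝ) / 2 ^ N) • x q‖ ^ p) (dyadic N k) :=
    fun k t ht => by
      simp only
      congr 2
      exact Finset.sum_congr rfl fun q hq => by
        rw [haarFn_eq_of_mem_dyadic (hs q hq) ht (left_mem_dyadic N k)]
  have hint : ∀ k ∈ Finset.range (2 ^ N),
      IntegrableOn (fun t => ‖∑ q ∈ s, haarFn q.1 q.2 t • x q‖ ^ p) (dyadic N k) := fun k _ =>
    (integrableOn_const (by simp [volume_dyadic])).congr_fun (hconst k).symm
      (measurableSet_dyadic N k)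
  rw [Ico_eq_biUnion_dyadic N, integral_biUnion_finset _ (fun k _ => measurableSet_dyadic N k)
    (fun k _ l _ hkl => Set.disjoint_left.mpr fun t hk hl => hkl (eq_of_mem_dyadic hk hl)) hint]
  refine Finset.sum_congr rfl fun k _ => ?_
  rw [setIntegral_congr_fun (measurableSet_dyadic N k) (hconst k), setIntegral_const,
    measureReal_def, volume_dyadic, ENNReal.toReal_ofReal (by positivity), smul_eq_mul]

end Dyadic

/-- The conclusion of `SupportsHaar F K` for one depth `n` and one `δ`, recorded through the
unions `U (j, k) = 𝒞_{(j,k)}*`; in (A10), `2ε = δ 2⁻ⁿ`. -/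
structure HaarSystem (F : FilteredAtomic Ω P) (K : ℝ) (n : ℕ) (δ : ℝ) where
  U : ℕ × ℕ → Set Ω
  g : ℕ × ℕ → Ω → ℝ
  A0 : Set Ω
  S : ℕ
  measure_A0_pos : 0 < P A0
  measurableSet_U : ∀ j k, j ≤ n → k < 2 ^ j → MeasurableSet (U (j, k))
  U_subset_iff : ∀ j k l i, j ≤ n → k < 2 ^ j → l ≤ n → i < 2 ^ l →
    (U (j, k) ⊆ U (l, i) ↔ dyadic j k ⊆ dyadic l i)
  U_inter_nonempty_iff : ∀ j k l i, j ≤ n → k < 2 ^ j → l ≤ n → i < 2 ^ l →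
    ((U (j, k) ∩ U (l, i)).Nonempty ↔ (dyadic j k ∩ dyadic l i).Nonempty)
  abs_g_le : ∀ j k, j + 1 ≤ n → k < 2 ^ j → ∀ ω, |g (j, k) ω| ≤ 1
  support_g : ∀ j k, j + 1 ≤ n → k < 2 ^ j → Function.support (g (j, k)) ⊆ U (j, k)
  g_eq_one : ∀ j k, j + 1 ≤ n → k < 2 ^ j → ∀ ω ∈ U (j + 1, 2 * k), g (j, k) ω = 1
  g_eq_neg_one : ∀ j k, j + 1 ≤ n → k < 2 ^ j → ∀ ω ∈ U (j + 1, 2 * k + 1), g (j, k) ω = -1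
  stronglyMeasurable_g : ∀ j k, j + 1 ≤ n → k < 2 ^ j → StronglyMeasurable[F.filt S] (g (j, k))
  mdiff_unique : ∀ A ∈ F.part S, ∀ m < S, ∀ j k j' k', j + 1 ≤ n → k < 2 ^ j →
    j' + 1 ≤ n → k' < 2 ^ j' →
    ¬ F.mdiff (g (j, k)) m =ᵐ[P.restrict A] 0 → ¬ F.mdiff (g (j', k')) m =ᵐ[P.restrict A] 0 →
    (j, k) = (j', k')
  tsum_eLpNorm_mdiff_le : ∀ j k, j + 1 ≤ n → k < 2 ^ j →
    ∑' i, eLpNorm (F.mdiff (g (j, k)) i) 1 P ≤ ENNReal.ofReal K * P (U (j, k))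
  measure_U_le : ∀ j k, j ≤ n → k < 2 ^ j → P (U (j, k)) ≤ ENNReal.ofReal ((2 ^ j)⁻¹) * P A0
  ofReal_mul_le_measure_U : ∀ j k, j ≤ n → k < 2 ^ j →
    ENNReal.ofReal ((2 ^ j)⁻¹ - δ * (2 ^ n)⁻¹) * P A0 ≤ P (U (j, k))

theorem SupportsHaar.nonempty_haarSystem {F : FilteredAtomic Ω P} {K : ℝ}
    (hK : SupportsHaar F K) (n : ℕ) {δ : ℝ} (hδ : 0 < δ) : Nonempty (HaarSystem F K n δ) := by
  obtain ⟨C, g, A0, S, hA0, -, -, -, h4, h5, h6, h7, h8, h9, h10⟩ := hK.2 n δ hδ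
  obtain ⟨l, hl⟩ := Set.mem_iUnion.mp hA0.1
  have hε : 2 * (δ * ((2 : ℝ) ^ (n + 1))⁻¹) = δ * (2 ^ n)⁻¹ := by rw [pow_succ, mul_inv]; ring
  exact ⟨{
    U := fun q => ⋃₀ C q
    g := g
    A0 := A0
    S := S
    measure_A0_pos := F.pos l A0 hl
    measurableSet_U := fun j k hj hk => F.measurableSet_sUnion (h6 j k hj hk)
    U_subset_iff := fun j k l i hj hk hl hi => (h4 j k l i hj hk hl hi).1
    U_inter_nonempty_iff := fun j k l i hj hk hl hi => (h4 j k l i hj hk hl hi).2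
    abs_g_le := fun j k hj hk ω => abs_le.2 ((h5 j k hj hk).1 ω)
    support_g := fun j k hj hk => (h5 j k hj hk).2.1
    g_eq_one := fun j k hj hk ω hω => (h5 j k hj hk).2.2.1 hω
    g_eq_neg_one := fun j k hj hk ω hω => (h5 j k hj hk).2.2.2 hω
    stronglyMeasurable_g := fun j k hj hk => (h7 j k hj hk).stronglyMeasurable
    mdiff_unique := fun A hA m hm => h8 A hA (m + 1) (by omega) hm
    tsum_eLpNorm_mdiff_le := h9
    measure_U_le := fun j k hj hk => (h10 j k hj hk).2
    ofReal_mul_le_measure_U := fun j k hj hk => hε ▸ (h10 j k hj hk).1 }⟩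

namespace HaarSystem

variable {F : FilteredAtomic Ω P} {K : ℝ} {n : ℕ} {δ : ℝ} (H : HaarSystem F K n δ)

theorem disjoint_U {j k k' : ℕ} (hj : j ≤ n) (hk : k < 2 ^ j) (hk' : k' < 2 ^ j)
    (hne : k ≠ k') : Disjoint (H.U (j, k)) (H.U (j, k')) := by
  rw [Set.disjoint_iff_inter_eq_empty, ← Set.not_nonempty_iff_eq_empty,
    H.U_inter_nonempty_iff j k j k' hj hk hj hk']
  rintro ⟨t, ht, ht'⟩
  exact hne (eq_of_mem_dyadic ht ht')

theorem g_eq_haarFn {k : ℕ} (hk : k < 2 ^ n) {ω : Ω} (hω : ω ∈ H.U (n, k)) {t : ℝ}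
    (ht : t ∈ dyadic n k) {j k' : ℕ} (hj : j + 1 ≤ n) (hk' : k' < 2 ^ j) :
    H.g (j, k') ω = haarFn j k' t := by
  set i := k / 2 ^ (n - (j + 1))
  have hi : i < 2 ^ (j + 1) := Nat.div_lt_of_lt_mul <| by
    rwa [← pow_add, Nat.sub_add_cancel hj]
  have hsub : ∀ i', i' < 2 ^ (j + 1) → i = i' → H.U (n, k) ⊆ H.U (j + 1, i') :=
    fun i' hi' hii' => (H.U_subset_iff n k (j + 1) i' le_rfl hk hj hi').2
      (hii' ▸ dyadic_subset_dyadic_div hj k)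
  rw [haarFn_of_mem_dyadic (dyadic_subset_dyadic_div hj k ht)]
  split_ifs with h1 h2 h2
  · omega
  · rw [H.g_eq_one j k' hj hk' ω (hsub _ (by omega) h1 hω)]; norm_num
  · rw [H.g_eq_neg_one j k' hj hk' ω (hsub _ (by omega) h2 hω)]; norm_num
  · by_contra hg
    obtain ⟨t', htn, htj⟩ := (H.U_inter_nonempty_iff n k j k' le_rfl hk (by omega) hk').1
      ⟨ω, hω, H.support_g j k' hj hk' (by simpa using hg)⟩
    have := eq_of_mem_dyadic
      (dyadic_succ_subset rfl (dyadic_subset_dyadic_div hj k htn)) htj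
    omega

variable {X : Type*} [NormedAddCommGroup X] [NormedSpace ℝ X]

/-- On `U (n, k)` the test function equals the Haar sum on `dyadic n k`, and by (A10) these
pieces have measure at least `(1 - δ) 2⁻ⁿ P(A₀)`. -/
theorem ofReal_mul_le_lintegral (hδ1 : δ ≤ 1) {p : ℝ} (hp : 0 < p) (s : Finset (ℕ × ℕ))
    (hs : ∀ q ∈ s, q.1 + 1 ≤ n ∧ q.2 < 2 ^ q.1) (x : ℕ × ℕ → X) :
    ENNReal.ofReal ((1 - δ) * ∫ t in Set.Ico (0 : ℝ) 1, ‖∑ q ∈ s, haarFn q.1 q.2 t • x q‖ ^ p) *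
        P H.A0 ≤ ∫⁻ ω, ‖∑ q ∈ s, H.g q ω • x q‖ₑ ^ p ∂P := by
  rw [setIntegral_Ico_norm_haar_sum_rpow n s (fun q hq => (hs q hq).1) x p]
  set v : ℕ → X := fun k => ∑ q ∈ s, haarFn q.1 q.2 ((k : ℝ) / 2 ^ n) • x q
  have hf : ∀ k < 2 ^ n, Set.EqOn (fun ω => ‖∑ q ∈ s, H.g q ω • x q‖ₑ ^ p) (fun _ => ‖v k‖ₑ ^ p)
      (H.U (n, k)) := fun k hk ω hω => by
    simp only [v]
    congr 2
    exact Finset.sum_congr rfl fun q hq => by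
      rw [H.g_eq_haarFn hk hω (left_mem_dyadic n k) (hs q hq).1 (hs q hq).2]
  have hdisj : Set.PairwiseDisjoint (Finset.range (2 ^ n) : Set ℕ) fun k => H.U (n, k) :=
    fun k hk k' hk' hne =>
      H.disjoint_U le_rfl (Finset.mem_range.mp hk) (Finset.mem_range.mp hk') hne
  have hc : 0 ≤ ((2 : ℝ) ^ n)⁻¹ - δ * (2 ^ n)⁻¹ := by
    have : (0 : ℝ) ≤ (1 - δ) * (2 ^ n)⁻¹ := mul_nonneg (by linarith) (by positivity)
    linarith
  have hreal : (1 - δ) * ∑ k ∈ Finset.range (2 ^ n), ((2 : ℝ) ^ n)⁻¹ * ‖v k‖ ^ p =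
      ∑ k ∈ Finset.range (2 ^ n), ‖v k‖ ^ p * ((2 ^ n)⁻¹ - δ * (2 ^ n)⁻¹) := by
    rw [Finset.mul_sum]
    exact Finset.sum_congr rfl fun k _ => by ring
  calc _ = ∑ k ∈ Finset.range (2 ^ n),
        ‖v k‖ₑ ^ p * (ENNReal.ofReal ((2 ^ n)⁻¹ - δ * (2 ^ n)⁻¹) * P H.A0) := by
        rw [hreal, ENNReal.ofReal_sum_of_nonneg fun k _ => by positivity, Finset.sum_mul]
        refine Finset.sum_congr rfl fun k _ => ?_
        rw [ENNReal.ofReal_mul (by positivity), mul_assoc,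
          ← ENNReal.ofReal_rpow_of_nonneg (norm_nonneg _) hp.le, ofReal_norm]
    _ ≤ ∑ k ∈ Finset.range (2 ^ n), ∫⁻ ω in H.U (n, k), ‖∑ q ∈ s, H.g q ω • x q‖ₑ ^ p ∂P := by
        refine Finset.sum_le_sum fun k hk => ?_
        rw [Finset.mem_range] at hk
        rw [setLIntegral_congr_fun (H.measurableSet_U n k le_rfl hk) (hf k hk),
          setLIntegral_const]
        exact mul_le_mul_right (H.ofReal_mul_le_measure_U n k le_rfl hk) _
    _ = ∫⁻ ω in ⋃ k ∈ Finset.range (2 ^ n), H.U (n, k), ‖∑ q ∈ s, H.g q ω • x q‖ₑ ^ p ∂P :=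
        (lintegral_biUnion_finset hdisj
          (fun k hk => H.measurableSet_U n k le_rfl (Finset.mem_range.mp hk)) _).symm
    _ ≤ _ := setLIntegral_le_lintegral _ _

section FiniteMeasure

variable [IsFiniteMeasure P]

theorem integrable_g {j k : ℕ} (hj : j + 1 ≤ n) (hk : k < 2 ^ j) : Integrable (H.g (j, k)) P :=
  .of_bound ((H.stronglyMeasurable_g j k hj hk).mono (F.filt_le H.S)).aestronglyMeasurable 1
    (ae_of_all _ fun ω => (Real.norm_eq_abs _).trans_le (H.abs_g_le j k hj hk ω))

/-- By (A10) the two halves of `𝒞_I*` have nearly equal measure and nearly fill it, so `g_I`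
has nearly zero mean. -/
theorem abs_integral_g_le (hδ : 0 ≤ δ) {j k : ℕ} (hj : j + 1 ≤ n) (hk : k < 2 ^ j) :
    |∫ ω, H.g (j, k) ω ∂P| ≤ 3 * δ * P.real H.A0 := by
  have hk0 : 2 * k < 2 ^ (j + 1) := by rw [pow_succ]; omega
  have hk1 : 2 * k + 1 < 2 ^ (j + 1) := by rw [pow_succ]; omega
  have key := abs_integral_sub_measureReal_sub_le (P := P)
    ((H.stronglyMeasurable_g j k hj hk).mono (F.filt_le H.S)).aestronglyMeasurable
    (H.abs_g_le j k hj hk) (H.measurableSet_U j k (by omega) hk)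
    (H.measurableSet_U _ _ hj hk0) (H.measurableSet_U _ _ hj hk1) (H.support_g j k hj hk)
    ((H.U_subset_iff _ _ j k hj hk0 (by omega) hk).2 (dyadic_succ_subset (by omega)))
    ((H.U_subset_iff _ _ j k hj hk1 (by omega) hk).2 (dyadic_succ_subset (by omega)))
    (H.disjoint_U hj hk0 hk1 (by omega)) (H.g_eq_one j k hj hk) (H.g_eq_neg_one j k hj hk)
  have hU := measureReal_le_mul_of_le_ofReal_mul (by positivity)
    (H.measure_U_le j k (by omega) hk)
  have hVle := measureReal_le_mul_of_le_ofReal_mul (by positivity) (H.measure_U_le _ _ hj hk0)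
  have hWle := measureReal_le_mul_of_le_ofReal_mul (by positivity) (H.measure_U_le _ _ hj hk1)
  have hVge := mul_measureReal_le_of_ofReal_mul_le (H.ofReal_mul_le_measure_U _ _ hj hk0)
  have hWge := mul_measureReal_le_of_ofReal_mul_le (H.ofReal_mul_le_measure_U _ _ hj hk1)
  have h2 : ((2 : ℝ) ^ j)⁻¹ * P.real H.A0 = 2 * ((2 ^ (j + 1))⁻¹ * P.real H.A0) := by
    rw [pow_succ, mul_inv]; ring
  have hδn : δ * (2 ^ n)⁻¹ * P.real H.A0 ≤ δ * P.real H.A0 :=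
    mul_le_mul_of_nonneg_right (mul_le_of_le_one_right hδ
      (inv_le_one_of_one_le₀ (one_le_pow₀ one_le_two))) measureReal_nonneg
  rw [abs_le] at key ⊢
  constructor <;> linarith

theorem norm_integral_sum_smul_le [CompleteSpace X] (hδ : 0 ≤ δ) (s : Finset (ℕ × ℕ))
    (hs : ∀ q ∈ s, q.1 + 1 ≤ n ∧ q.2 < 2 ^ q.1) (x : ℕ × ℕ → X) :
    ‖∫ ω, ∑ q ∈ s, H.g q ω • x q ∂P‖ ≤ 3 * δ * P.real H.A0 * ∑ q ∈ s, ‖x q‖ := by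
  rw [integral_finsetSum s fun q hq => (H.integrable_g (hs q hq).1 (hs q hq).2).smul_const _,
    Finset.mul_sum]
  refine (norm_sum_le _ _).trans (Finset.sum_le_sum fun q hq => ?_)
  rw [integral_smul_const, norm_smul, Real.norm_eq_abs]
  exact mul_le_mul_of_nonneg_right (H.abs_integral_g_le hδ (hs q hq).1 (hs q hq).2)
    (norm_nonneg _)

theorem ae_mdiff_unique (m : ℕ) (s : Finset (ℕ × ℕ))
    (hs : ∀ q ∈ s, q.1 + 1 ≤ n ∧ q.2 < 2 ^ q.1) :
    ∀ᵐ ω ∂P, ∀ q ∈ s, ∀ q' ∈ s,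
      F.mdiff (H.g q) m ω ≠ 0 → F.mdiff (H.g q') m ω ≠ 0 → q = q' := by
  rcases lt_or_ge m H.S with hm | hm
  · refine F.ae_of_forall_part (S := H.S) fun A hA => ?_
    refine (Filter.eventually_all_finset s).2 fun q hq =>
      (Filter.eventually_all_finset s).2 fun q' hq' => ?_
    by_cases hqq : q = q'
    · exact ae_of_all _ fun _ _ _ => hqq
    by_cases h0 : F.mdiff (H.g q) m =ᵐ[P.restrict A] 0
    · filter_upwards [h0] with ω hω h
      exact absurd hω h
    by_cases h0' : F.mdiff (H.g q') m =ᵐ[P.restrict A] 0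
    · filter_upwards [h0'] with ω hω _ h
      exact absurd hω h
    exact absurd (H.mdiff_unique A hA m hm q.1 q.2 q'.1 q'.2 (hs q hq).1 (hs q hq).2
      (hs q' hq').1 (hs q' hq').2 h0 h0') hqq
  · refine ae_of_all _ fun ω q hq _ _ h _ => absurd ?_ h
    exact congrFun (condExp_succ_sub_condExp_eq_zero (ℱ := F.filtration) hm
      (H.stronglyMeasurable_g q.1 q.2 (hs q hq).1 (hs q hq).2)
      (H.integrable_g (hs q hq).1 (hs q hq).2)) ω

theorem memLp_sum_smul (s : Finset (ℕ × ℕ)) (hs : ∀ q ∈ s, q.1 + 1 ≤ n ∧ q.2 < 2 ^ q.1)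
    (x : ℕ × ℕ → X) (r : ℝ≥0∞) : MemLp (fun ω => ∑ q ∈ s, H.g q ω • x q) r P := by
  refine .of_bound (integrable_finsetSum s fun q hq =>
    (H.integrable_g (hs q hq).1 (hs q hq).2).smul_const (x q)).1 (∑ q ∈ s, ‖x q‖)
    (ae_of_all _ fun ω => (norm_sum_le _ _).trans (Finset.sum_le_sum fun q hq => ?_))
  rw [norm_smul, Real.norm_eq_abs]
  exact mul_le_of_le_one_left (norm_nonneg _) (H.abs_g_le q.1 q.2 (hs q hq).1 (hs q hq).2 ω)

theorem eLpNorm_mdiff_sum_smul_rpow_le [CompleteSpace X] {p : ℝ} (hp : 0 < p)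
    (s : Finset (ℕ × ℕ)) (hs : ∀ q ∈ s, q.1 + 1 ≤ n ∧ q.2 < 2 ^ q.1) (x : ℕ × ℕ → X) (m : ℕ) :
    eLpNorm (F.mdiff (fun ω => ∑ q ∈ s, H.g q ω • x q) m) (ENNReal.ofReal p) P ^ p ≤
      ∑ q ∈ s, ‖x q‖ₑ ^ p * ∫⁻ ω, ‖F.mdiff (H.g q) m ω‖ₑ ^ p ∂P := by
  have hgi : ∀ q ∈ s, Integrable (H.g q) P := fun q hq => H.integrable_g (hs q hq).1 (hs q hq).2
  have hae : F.mdiff (fun ω => ∑ q ∈ s, H.g q ω • x q) m =ᵐ[P]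
      fun ω => ∑ q ∈ s, F.mdiff (H.g q) m ω • x q := by
    filter_upwards [condExp_sum_smul_ae_eq (m := F.filt (m + 1)) s hgi x,
      condExp_sum_smul_ae_eq (m := F.filt m) s hgi x] with ω h1 h2
    simp only [FilteredAtomic.mdiff, Pi.sub_apply, h1, h2, ← Finset.sum_sub_distrib, sub_smul]
  rw [eLpNorm_ofReal_rpow_eq_lintegral hp,
    lintegral_congr_ae (g := fun ω => ‖∑ q ∈ s, F.mdiff (H.g q) m ω • x q‖ₑ ^ p)
      (hae.mono fun ω hω => by simp only [hω])]
  exact lintegral_enorm_sum_smul_rpow_le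
    (fun q _ => (integrable_condExp.1.sub integrable_condExp.1).aemeasurable)
    (H.ae_mdiff_unique m s hs) x hp

/-- Each `g_I` obeys the scalar estimate with `U = 𝒞_I*`, and by (A8) the increments of the
different `g_I` never overlap, so the estimates add up. -/
theorem tsum_eLpNorm_mdiff_sum_smul_rpow_le [CompleteSpace X] (hK : 0 ≤ K) {p : ℝ}
    (hp1 : 1 ≤ p) (hp2 : p ≤ 2) (s : Finset (ℕ × ℕ))
    (hs : ∀ q ∈ s, q.1 + 1 ≤ n ∧ q.2 < 2 ^ q.1) (x : ℕ × ℕ → X) :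
    ∑' m, eLpNorm (F.mdiff (fun ω => ∑ q ∈ s, H.g q ω • x q) m) (ENNReal.ofReal p) P ^ p ≤
      ENNReal.ofReal (K ^ (2 - p) * ∑ q ∈ s, ‖x q‖ ^ p * (2 ^ q.1)⁻¹) * P H.A0 := by
  have hp0 : 0 < p := by linarith
  have hscalar : ∀ q ∈ s, ∑' m, ∫⁻ ω, ‖F.mdiff (H.g q) m ω‖ₑ ^ p ∂P ≤
      ENNReal.ofReal K ^ (2 - p) * (ENNReal.ofReal ((2 ^ q.1)⁻¹) * P H.A0) := fun q hq =>
    (tsum_lintegral_condExp_sub_rpow_le (ℱ := F.filtration)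
      ((H.stronglyMeasurable_g q.1 q.2 (hs q hq).1 (hs q hq).2).mono
        (F.filt_le H.S)).aestronglyMeasurable
      (H.abs_g_le q.1 q.2 (hs q hq).1 (hs q hq).2)
      (H.measurableSet_U q.1 q.2 (Nat.le_of_succ_le (hs q hq).1) (hs q hq).2)
      (H.support_g q.1 q.2 (hs q hq).1 (hs q hq).2)
      hp1 hp2 (H.tsum_eLpNorm_mdiff_le q.1 q.2 (hs q hq).1 (hs q hq).2)).trans
      (mul_le_mul_right (H.measure_U_le q.1 q.2 (Nat.le_of_succ_le (hs q hq).1) (hs q hq).2) _)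
  calc _ ≤ ∑' m, ∑ q ∈ s, ‖x q‖ₑ ^ p * ∫⁻ ω, ‖F.mdiff (H.g q) m ω‖ₑ ^ p ∂P :=
        ENNReal.tsum_le_tsum (H.eLpNorm_mdiff_sum_smul_rpow_le hp0 s hs x)
    _ = ∑ q ∈ s, ‖x q‖ₑ ^ p * ∑' m, ∫⁻ ω, ‖F.mdiff (H.g q) m ω‖ₑ ^ p ∂P := by
        rw [Summable.tsum_finsetSum fun _ _ => ENNReal.summable]
        simp_rw [ENNReal.tsum_mul_left]
    _ ≤ ∑ q ∈ s, ‖x q‖ₑ ^ p *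
          (ENNReal.ofReal K ^ (2 - p) * (ENNReal.ofReal ((2 ^ q.1)⁻¹) * P H.A0)) :=
        Finset.sum_le_sum fun q hq => mul_le_mul_right (hscalar q hq) _
    _ = _ := by
        rw [ENNReal.ofReal_mul (by positivity), ← ENNReal.ofReal_rpow_of_nonneg hK (by linarith),
          ← sum_enorm_rpow_mul_ofReal s x (fun _ _ => by positivity) hp0.le]
        simp only [Finset.mul_sum, Finset.sum_mul]
        exact Finset.sum_congr rfl fun _ _ => by ring

end FiniteMeasure

theorem enorm_integral_sum_smul_rpow_le [IsProbabilityMeasure P] [CompleteSpace X] (hδ : 0 ≤ δ)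
    {p : ℝ} (hp : 1 ≤ p) (s : Finset (ℕ × ℕ)) (hs : ∀ q ∈ s, q.1 + 1 ≤ n ∧ q.2 < 2 ^ q.1)
    (x : ℕ × ℕ → X) :
    ‖∫ ω, ∑ q ∈ s, H.g q ω • x q ∂P‖ₑ ^ p ≤
      ENNReal.ofReal ((3 * (∑ q ∈ s, ‖x q‖) * δ) ^ p) * P H.A0 := by
  set a := P.real H.A0
  set b := 3 * (∑ q ∈ s, ‖x q‖) * δ
  have ha0 : 0 < a := ENNReal.toReal_pos H.measure_A0_pos.ne' (measure_ne_top _ _)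
  have hb : 0 ≤ b := by positivity
  have hap : a ^ p ≤ a :=
    (Real.rpow_le_rpow_of_exponent_ge ha0 measureReal_le_one hp).trans_eq (Real.rpow_one a)
  calc ‖∫ ω, ∑ q ∈ s, H.g q ω • x q ∂P‖ₑ ^ p
      = ENNReal.ofReal ‖∫ ω, ∑ q ∈ s, H.g q ω • x q ∂P‖ ^ p := by rw [ofReal_norm]
    _ ≤ ENNReal.ofReal (b * a) ^ p := by
        refine ENNReal.rpow_le_rpow (ENNReal.ofReal_le_ofReal ?_) (by linarith)
        exact (H.norm_integral_sum_smul_le hδ s hs x).trans_eq (by ring)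
    _ ≤ ENNReal.ofReal (b ^ p * a) := by
        rw [ENNReal.ofReal_rpow_of_nonneg (by positivity) (by linarith),
          Real.mul_rpow hb ha0.le]
        exact ENNReal.ofReal_le_ofReal (mul_le_mul_of_nonneg_left hap (by positivity))
    _ = ENNReal.ofReal (b ^ p) * P H.A0 := by
        rw [ENNReal.ofReal_mul (by positivity), ofReal_measureReal]

end HaarSystem

theorem SupportsHaar.one_sub_mul_integral_le [IsProbabilityMeasure P]
    {F : FilteredAtomic Ω P} {K : ℝ} (hK : SupportsHaar F K) {δ : ℝ} (hδ : δ ∈ Set.Ioo (0 : ℝ) 1)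
    {p : ℝ} (hp1 : 1 < p) (hp2 : p ≤ 2) {X : Type*} [NormedAddCommGroup X] [NormedSpace ℝ X]
    [CompleteSpace X] {T : ℝ} (hT : 0 ≤ T)
    (hineq : ∀ f : Ω → X, MemLp f (ENNReal.ofReal p) P →
      eLpNorm f (ENNReal.ofReal p) P ≤ ENNReal.ofReal T * F.mtBound f p)
    {n : ℕ} (s : Finset (ℕ × ℕ)) (hs : ∀ q ∈ s, q.1 + 1 ≤ n ∧ q.2 < 2 ^ q.1)
    (x : ℕ × ℕ → X) :
    (1 - δ) * ∫ t in Set.Ico (0 : ℝ) 1, ‖∑ q ∈ s, haarFn q.1 q.2 t • x q‖ ^ p ≤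
      T ^ p * (K ^ (2 - p) * ∑ q ∈ s, ‖x q‖ ^ p * (2 ^ q.1)⁻¹) +
        T ^ p * (3 * (∑ q ∈ s, ‖x q‖) * δ) ^ p := by
  obtain ⟨H⟩ := hK.nonempty_haarSystem n hδ.1
  have hp0 : 0 < p := by linarith
  have hK0 : 0 ≤ K := hK.1.le
  have hδ0 : 0 ≤ δ := hδ.1.le
  set f := fun ω => ∑ q ∈ s, H.g q ω • x q
  set A := 3 * (∑ q ∈ s, ‖x q‖) * δ
  set B := K ^ (2 - p) * ∑ q ∈ s, ‖x q‖ ^ p * (2 ^ q.1)⁻¹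
  have hA : 0 ≤ A := by positivity
  have hB : 0 ≤ B := by positivity
  have hRHS : ENNReal.ofReal T ^ p * (ENNReal.ofReal (A ^ p) * P H.A0 + ENNReal.ofReal B * P H.A0)
      = ENNReal.ofReal (T ^ p * B + T ^ p * A ^ p) * P H.A0 := by
    rw [ENNReal.ofReal_rpow_of_nonneg hT hp0.le, ← add_mul,
      ← ENNReal.ofReal_add (by positivity) hB, ← mul_assoc,
      ← ENNReal.ofReal_mul (by positivity), add_comm, mul_add]
  have hchain : ENNReal.ofReal ((1 - δ) *
      ∫ t in Set.Ico (0 : ℝ) 1, ‖∑ q ∈ s, haarFn q.1 q.2 t • x q‖ ^ p) * P H.A0 ≤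
      ENNReal.ofReal (T ^ p * B + T ^ p * A ^ p) * P H.A0 := calc
    _ ≤ ∫⁻ ω, ‖f ω‖ₑ ^ p ∂P := H.ofReal_mul_le_lintegral hδ.2.le hp0 s hs x
    _ = eLpNorm f (ENNReal.ofReal p) P ^ p := (eLpNorm_ofReal_rpow_eq_lintegral hp0).symm
    _ ≤ (ENNReal.ofReal T * F.mtBound f p) ^ p :=
        ENNReal.rpow_le_rpow (hineq f (H.memLp_sum_smul s hs x _)) hp0.le
    _ = ENNReal.ofReal T ^ p * (‖∫ ω, f ω ∂P‖ₑ ^ p +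
          ∑' m, eLpNorm (F.mdiff f m) (ENNReal.ofReal p) P ^ p) := by
        rw [ENNReal.mul_rpow_of_nonneg _ _ hp0.le, F.mtBound_rpow f hp0]
    _ ≤ _ := hRHS ▸ mul_le_mul_right (add_le_add
          (H.enorm_integral_sum_smul_rpow_le hδ0 hp1.le s hs x)
          (H.tsum_eLpNorm_mdiff_sum_smul_rpow_le hK0 hp1.le hp2 s hs x)) _
  exact (ENNReal.ofReal_le_ofReal_iff (by positivity)).1
    ((ENNReal.mul_le_mul_iff_left H.measure_A0_pos.ne' (measure_ne_top _ _)).1 hchain)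

end Paper

open MeasureTheory ENNReal in
/-- If ℰ supports all initial segments of a generalized Haar system with
constant `K` and the upper ℓ^p estimate holds for `X` with constant `T`, then `X` has Haar
type `p` with constant `T·K^{2/p-1}`. -/
theorem statement_5 {Ω : Type*} [m0 : MeasurableSpace Ω] (P : Measure Ω)
    [IsProbabilityMeasure P] (F : Paper.FilteredAtomic Ω P)
    (p : ℝ) (hp1 : 1 < p) (hp2 : p ≤ 2)
    (K : ℝ) (hK : Paper.SupportsHaar F K)
    (X : Type*) [NormedAddCommGroup X] [NormedSpace ℝ X] [CompleteSpace X]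
    (T : ℝ) (hT : 0 < T)
    (hineq : ∀ f : Ω → X, MemLp f (ENNReal.ofReal p) P →
      eLpNorm f (ENNReal.ofReal p) P ≤ ENNReal.ofReal T * F.mtBound f p) :
    Paper.HaarTypeWith X p (T * K ^ (2 / p - 1)) := by
  intro s hs x
  have hp0 : 0 < p := by linarith
  have hsN : ∀ q ∈ s, q.1 + 1 ≤ s.sup Prod.fst + 1 ∧ q.2 < 2 ^ q.1 := fun q hq =>
    ⟨Nat.succ_le_succ (Finset.le_sup (f := Prod.fst) hq), hs q hq⟩
  set S := ∑ q ∈ s, ‖x q‖ ^ p * ((2 : ℝ) ^ q.1)⁻¹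
  have hS : 0 ≤ S := Finset.sum_nonneg fun q _ => by positivity
  have hL : ∫ t in Set.Ico (0 : ℝ) 1, ‖∑ q ∈ s, Paper.haarFn q.1 q.2 t • x q‖ ^ p ≤
      T ^ p * (K ^ (2 - p) * S) :=
    Paper.le_of_forall_one_sub_mul_le_add hp0 fun δ hδ =>
      hK.one_sub_mul_integral_le hδ hp1 hp2 hT.le hineq s hsN x
  calc _ ≤ (T ^ p * (K ^ (2 - p) * S)) ^ (1 / p) :=
        Real.rpow_le_rpow (integral_nonneg fun t => by positivity) hL (by positivity)
    _ = T * K ^ (2 / p - 1) * S ^ (1 / p) := by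
        rw [Real.mul_rpow (by positivity) (mul_nonneg (Real.rpow_nonneg hK.1.le _) hS),
          Real.mul_rpow (Real.rpow_nonneg hK.1.le _) hS, ← Real.rpow_mul hT.le,
          ← Real.rpow_mul hK.1.le,
          mul_one_div_cancel hp0.ne', Real.rpow_one, show (2 - p) * (1 / p) = 2 / p - 1 by
            field_simp, mul_assoc]
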